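/- (Finite-interval renormalized oscillation theorem) Let V : ℝ → ℝ be bounded and continuous, let E₁ < E₂, and for j = 1,2 let u_j = u(·,E_j) be the solution of −u″ + Vu = E_j u with u_j(0) = 0, u_j′(0) = 1. Let a > 0 and suppose u₂(a) = 0 and u₁(a) ≠ 0. Define the Wronskian W(x) = u₁(x)u₂′(x) − u₁′(x)u₂(x). Then the number of Dirichlet eigenvalues of −d²/dx² + V on [0,a] lying in the open interval (E₁, E₂) equals the number of zeros of W in the open interval (0,a). -/

import Mathlib

open Set

/-- `E` is a Dirichlet eigenvalue of `−d²/dx² + V` on `[0,a]`: there is a not-identically-zero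
solution of `−u″ + Vu = Eu` on `[0,a]` with `u(0) = u(a) = 0`. -/
def IsDirichletEigenvalue (V : ℝ → ℝ) (a E : ℝ) : Prop :=
  ∃ u : ℝ → ℝ, ContDiff ℝ 2 u ∧
    (∀ x ∈ Set.Icc 0 a, deriv (deriv u) x = (V x - E) * u x) ∧
    (∃ x ∈ Set.Icc 0 a, u x ≠ 0) ∧ u 0 = 0 ∧ u a = 0

/-!
Write the solution of `−u″ + Vu = Eu` with `u(0) = 0`, `u′(0) = 1` in Prüfer form
`u = r sin θ_E`, `u′ = r cos θ_E` with `r > 0` and `θ_E(0) = 0`; the angle solves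
`θ′ = cos² θ + (E − V) sin² θ`. For `E < E′` this field exceeds the one at `E` by
`(E′ − E) sin² θ`, and `sin θ` cannot vanish on an interval along a solution, so an angle of
higher energy that catches up with one of lower energy is strictly ahead afterwards.

Hence `E ↦ θ_E(a)` is strictly increasing (and continuous, by Grönwall), and the eigenvalues in
`(E₁, E₂)` correspond to the multiples of `π` in `(θ_{E₁}(a), θ_{E₂}(a))`. The Wronskian is
`−r₁ r₂ sin (θ_{E₂} − θ_{E₁})`; the comparison applied to `θ_{E₁} + kπ` shows that
`θ_{E₂} − θ_{E₁}`, which starts at `0`, crosses each level `kπ` once and upwards, so the zeros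
of the Wronskian in `(0, a)` correspond to the multiples of `π` in `(0, θ_{E₂}(a) − θ_{E₁}(a))`.
As `θ_{E₂}(a) = Nπ`, the reflection `k ↦ N − k` matches the two sets of levels.
-/

open Real Filter Metric
open scoped NNReal Topology

theorem exists_isIntegralCurve_of_lipschitzWith {E : Type*} [NormedAddCommGroup E]
    [NormedSpace ℝ E] [CompleteSpace E] {v : ℝ → E → E} {K C : ℝ≥0}
    (hlip : ∀ t, LipschitzWith K (v t)) (hcont : ∀ x, Continuous (v · x))
    (hbound : ∀ t x, ‖v t x‖ ≤ C) (t₀ : ℝ) (x₀ : E) :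
    ∃ γ : ℝ → E, γ t₀ = x₀ ∧ IsIntegralCurve γ v := by
  have hloc (n : ℕ) : ∃ γ : ℝ → E, γ t₀ = x₀ ∧
      ∀ t ∈ ball t₀ (n + 1), HasDerivAt γ (v t (γ t)) t := by
    have hpl : IsPicardLindelof v (tmin := t₀ - (n + 1)) (tmax := t₀ + (n + 1))
        ⟨t₀, by constructor <;> linarith⟩ x₀ (C * (n + 1)) 0 C K :=
      { lipschitzOnWith := fun t _ ↦ (hlip t).lipschitzOnWith
        continuousOn := fun x _ ↦ (hcont x).continuousOn
        norm_le := fun t _ x _ ↦ hbound t x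
        mul_max_le := by simp }
    obtain ⟨γ, hγ₀, hγ⟩ := hpl.exists_eq_forall_mem_Icc_hasDerivWithinAt₀
    refine ⟨γ, hγ₀, fun t ht ↦ ?_⟩
    rw [Real.ball_eq_Ioo] at ht
    exact (hγ t (Ioo_subset_Icc_self ht)).hasDerivAt (Icc_mem_nhds ht.1 ht.2)
  choose γ hγ₀ hγ using hloc
  have hagree {m n : ℕ} (hmn : m ≤ n) : EqOn (γ m) (γ n) (ball t₀ (m + 1)) := by
    have hsub : ball t₀ (m + 1 : ℝ) ⊆ ball t₀ (n + 1) := ball_subset_ball (by gcongr)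
    rw [Real.ball_eq_Ioo]
    exact ODE_solution_unique_of_mem_Ioo (s := fun _ ↦ univ) (t₀ := t₀)
      (fun t _ ↦ (hlip t).lipschitzOnWith) ⟨by linarith, by linarith⟩
      (fun t ht ↦ ⟨hγ m t (by rwa [Real.ball_eq_Ioo]), mem_univ _⟩)
      (fun t ht ↦ ⟨hγ n t (hsub (by rwa [Real.ball_eq_Ioo])), mem_univ _⟩) (by rw [hγ₀, hγ₀])
  have hglue {m n : ℕ} {t : ℝ} (hm : t ∈ ball t₀ (m + 1)) (hn : t ∈ ball t₀ (n + 1)) :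
      γ m t = γ n t := by
    rcases le_total m n with h | h
    exacts [hagree h hm, (hagree h hn).symm]
  have hN (t : ℝ) : t ∈ ball t₀ (⌈dist t t₀⌉₊ + 1) :=
    mem_ball.2 (by linarith [Nat.le_ceil (dist t t₀)])
  refine ⟨fun t ↦ γ ⌈dist t t₀⌉₊ t, hγ₀ _, fun t ↦ ?_⟩
  have hev : (fun s ↦ γ ⌈dist s t₀⌉₊ s) =ᶠ[𝓝 t] γ ⌈dist t t₀⌉₊ :=
    eventually_of_mem (isOpen_ball.mem_nhds (hN t)) fun s hs ↦ hglue (hN s) hs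
  exact (hγ _ t (hN t)).congr_of_eventuallyEq hev

theorem nonpos_of_hasDerivAt_le_mul {f f' : ℝ → ℝ} {L x₀ x : ℝ}
    (hf : ∀ t, HasDerivAt f (f' t) t) (hL : ∀ t, 0 < f t → f' t ≤ L * f t)
    (h₀ : f x₀ ≤ 0) (hx : x₀ ≤ x) : f x ≤ 0 := by
  by_contra! hpos
  set K := |L| + 1
  -- `f` stays below each barrier `ε e^{K (t - x₀)}`, since `K > L`.
  have hfence (ε : ℝ) (hε : 0 < ε) : f x ≤ ε * exp (K * (x - x₀)) := by
    refine image_le_of_deriv_right_lt_deriv_boundary'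
      (fun t _ ↦ (hf t).continuousAt.continuousWithinAt) (fun t _ ↦ (hf t).hasDerivWithinAt)
      (B := fun t ↦ ε * exp (K * (t - x₀))) (B' := fun t ↦ K * (ε * exp (K * (t - x₀))))
      (by simpa using h₀.trans hε.le) (by fun_prop) (fun t _ ↦ ?_) (fun t _ hft ↦ ?_) ⟨hx, le_rfl⟩
    · exact HasDerivAt.hasDerivWithinAt <| by
        simpa [mul_comm, mul_left_comm] using
          (((hasDerivAt_id t).sub_const x₀).const_mul K).exp.const_mul ε
    · have hB : 0 < ε * exp (K * (t - x₀)) := by positivity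
      calc f' t ≤ L * f t := hL t (hft ▸ hB)
        _ < K * (ε * exp (K * (t - x₀))) := by
          rw [hft]; exact mul_lt_mul_of_pos_right (by linarith [le_abs_self L]) hB
  have := hfence (f x / (2 * exp (K * (x - x₀)))) (by positivity)
  rw [div_mul_eq_mul_div, mul_div_mul_right _ _ (exp_pos _).ne'] at this
  linarith

theorem nonpos_of_neg_mul_le_hasDerivAt {f f' : ℝ → ℝ} {L x₀ x : ℝ}
    (hf : ∀ t, HasDerivAt f (f' t) t) (hL : ∀ t, 0 < f t → -(L * f t) ≤ f' t)
    (h₀ : f x₀ ≤ 0) (hx : x ≤ x₀) : f x ≤ 0 := by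
  simpa using nonpos_of_hasDerivAt_le_mul (f := fun t ↦ f (-t)) (f' := fun t ↦ -f' (-t))
    (fun t ↦ by simpa [Function.comp_def] using (hf (-t)).comp t (hasDerivAt_neg t))
    (fun t ht ↦ by linarith [hL (-t) ht]) (L := L) (x₀ := -x₀) (by simpa using h₀)
    (neg_le_neg hx)

theorem eq_zero_of_hasDerivAt_mul_self_of_eq_zero_right {q y y' : ℝ → ℝ} {a b : ℝ}
    (hq : ContinuousOn q (Icc a b)) (hy : ∀ x ∈ Icc a b, HasDerivAt y (y' x) x)
    (hy' : ∀ x ∈ Icc a b, HasDerivAt y' (q x * y x) x) (ha : y a = 0) (ha' : y' a = 0) :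
    ∀ x ∈ Icc a b, y x = 0 ∧ y' x = 0 := by
  obtain ⟨Q, hQ⟩ := isCompact_Icc.exists_bound_of_continuousOn hq
  have hY (x : ℝ) (hx : x ∈ Icc a b) :
      HasDerivAt (fun x ↦ (y x, y' x)) (y' x, q x * y x) x :=
    (hy x hx).prodMk (hy' x hx)
  have hbound (x : ℝ) (hx : x ∈ Ico a b) :
      ‖(y' x, q x * y x)‖ ≤ max 1 Q * ‖(y x, y' x)‖ := by
    have hQx := hQ x (Ico_subset_Icc_self hx)
    simp only [Prod.norm_def, norm_mul]
    refine max_le ?_ ?_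
    · exact (le_max_right _ _).trans (le_mul_of_one_le_left (by positivity) (le_max_left _ _))
    · exact mul_le_mul hQx (le_max_left _ _) (norm_nonneg _) ((norm_nonneg _).trans hQx) |>.trans
        (by gcongr; exact le_max_right _ _)
  intro x hx
  simpa [Prod.ext_iff] using eq_zero_of_abs_deriv_le_mul_abs_self_of_eq_zero_right
    (fun x hx ↦ (hY x hx).continuousAt.continuousWithinAt)
    (fun x hx ↦ (hY x (Ico_subset_Icc_self hx)).hasDerivWithinAt) (by simp [ha, ha'])
    hbound x hx

theorem hasDerivAt_deriv_of_contDiff_two {u : ℝ → ℝ} (hu : ContDiff ℝ 2 u) (x : ℝ) :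
    HasDerivAt u (deriv u x) x ∧ HasDerivAt (deriv u) (deriv (deriv u) x) x := by
  have hu' : ContDiff ℝ 1 (deriv u) := ((contDiff_succ_iff_deriv (n := 1)).1 hu).2.2
  exact ⟨(hu.differentiable (by norm_num) x).hasDerivAt,
    (hu'.differentiable one_ne_zero x).hasDerivAt⟩

theorem contDiff_two_of_hasDerivAt {u u' u'' : ℝ → ℝ} (h : ∀ x, HasDerivAt u (u' x) x)
    (h' : ∀ x, HasDerivAt u' (u'' x) x) (h'' : Continuous u'') : ContDiff ℝ 2 u := by
  have hu : deriv u = u' := funext fun x ↦ (h x).deriv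
  have hu' : deriv u' = u'' := funext fun x ↦ (h' x).deriv
  refine (contDiff_succ_iff_deriv (n := 1)).2 ⟨fun x ↦ (h x).differentiableAt, by simp, ?_⟩
  rw [hu, contDiff_one_iff_deriv, hu']
  exact ⟨fun x ↦ (h' x).differentiableAt, h''⟩

theorem finite_and_ncard_sin_eq_zero_eq {f : ℝ → ℝ} {s t : ℝ} (hst : s ≤ t)
    (hf : ContinuousOn f (Icc s t))
    (hcross : ∀ x ∈ Icc s t, ∀ y ∈ Icc s t, x < y → (sin (f x) = 0 ∨ sin (f y) = 0) →
      f x < f y) :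
    {x ∈ Ioo s t | sin (f x) = 0}.Finite ∧
      {x ∈ Ioo s t | sin (f x) = 0}.ncard = {k : ℤ | f s < k * π ∧ k * π < f t}.ncard := by
  set Z := {x ∈ Ioo s t | sin (f x) = 0}
  set K := {k : ℤ | f s < k * π ∧ k * π < f t}
  have hround {x : ℝ} (hx : sin (f x) = 0) : (round (f x / π) : ℝ) * π = f x := by
    obtain ⟨k, hk⟩ := sin_eq_zero_iff.1 hx
    rw [← hk, mul_div_cancel_right₀ _ pi_ne_zero, round_intCast]
  have hbij : BijOn (fun x ↦ round (f x / π)) Z K := by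
    refine ⟨fun x ⟨hx, hfx⟩ ↦ ?_, fun x ⟨hx, hfx⟩ y ⟨hy, hfy⟩ hxy ↦ ?_, fun k ⟨hsk, hkt⟩ ↦ ?_⟩
    · have hx' := Ioo_subset_Icc_self hx
      show f s < (round (f x / π) : ℝ) * π ∧ (round (f x / π) : ℝ) * π < f t
      rw [hround hfx]
      exact ⟨hcross s (left_mem_Icc.2 hst) x hx' hx.1 (.inr hfx),
        hcross x hx' t (right_mem_Icc.2 hst) hx.2 (.inl hfx)⟩
    · have hfxy : f x = f y := by
        rw [← hround hfx, ← hround hfy]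
        exact congrArg (fun k : ℤ ↦ (k : ℝ) * π) hxy
      have hx' := Ioo_subset_Icc_self hx
      have hy' := Ioo_subset_Icc_self hy
      by_contra hne
      rcases lt_or_gt_of_ne hne with h | h
      · exact (hcross x hx' y hy' h (.inl hfx)).ne hfxy
      · exact (hcross y hy' x hx' h (.inl hfy)).ne' hfxy
    · obtain ⟨x, hx, hfx⟩ := intermediate_value_Ioo hst hf ⟨hsk, hkt⟩
      have hsin : sin (f x) = 0 := by rw [hfx, sin_int_mul_pi]
      refine ⟨x, ⟨hx, hsin⟩, ?_⟩
      exact_mod_cast mul_right_cancel₀ pi_ne_zero ((hround hsin).trans hfx)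
  have hK : K.Finite := (finite_Ioo ⌊f s / π⌋ ⌈f t / π⌉).subset fun k ⟨hsk, hkt⟩ ↦
    ⟨Int.floor_lt.2 ((div_lt_iff₀ pi_pos).2 hsk), Int.lt_ceil.2 ((lt_div_iff₀ pi_pos).2 hkt)⟩
  exact ⟨.of_finite_image (hbij.image_eq ▸ hK) hbij.injOn,
    hbij.image_eq ▸ hbij.injOn.ncard_image |>.symm⟩

theorem ncard_int_mul_pi_mem_Ioo_reflect (A : ℝ) (N : ℤ) :
    {k : ℤ | A < k * π ∧ k * π < N * π}.ncard =
      {k : ℤ | 0 < k * π ∧ k * π < N * π - A}.ncard := by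
  refine ncard_congr (fun k _ ↦ N - k) (fun k ⟨h₁, h₂⟩ ↦ ?_) (fun k l _ _ h ↦ by simpa using h)
    (fun j ⟨h₁, h₂⟩ ↦ ⟨N - j, ?_, by simp⟩)
  · show 0 < ((N - k : ℤ) : ℝ) * π ∧ ((N - k : ℤ) : ℝ) * π < N * π - A
    push_cast; constructor <;> linarith
  · show A < ((N - j : ℤ) : ℝ) * π ∧ ((N - j : ℤ) : ℝ) * π < N * π
    push_cast; constructor <;> linarith

theorem polar_wronskian_eq_zero_iff {r₁ r₂ : ℝ} (h₁ : r₁ ≠ 0) (h₂ : r₂ ≠ 0) (θ₁ θ₂ : ℝ) :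
    r₁ * sin θ₁ * (r₂ * cos θ₂) - r₁ * cos θ₁ * (r₂ * sin θ₂) = 0 ↔ sin (θ₂ - θ₁) = 0 := by
  rw [show r₁ * sin θ₁ * (r₂ * cos θ₂) - r₁ * cos θ₁ * (r₂ * sin θ₂) =
    -(r₁ * r₂) * sin (θ₂ - θ₁) by rw [sin_sub]; ring]
  simp [h₁, h₂]

/-- Substituting `u = r sin θ`, `u′ = r cos θ` into `−u″ + Vu = Eu` gives
`θ′ = pruferField V E x θ` and `r′ = (1 + V x − E) r sin θ cos θ`. -/
noncomputable def pruferField (V : ℝ → ℝ) (E x θ : ℝ) : ℝ := cos θ ^ 2 + (E - V x) * sin θ ^ 2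

noncomputable def pruferAmplitude (V : ℝ → ℝ) (E : ℝ) (θ : ℝ → ℝ) (x : ℝ) : ℝ :=
  exp (∫ t in 0..x, (1 + V t - E) * (sin (θ t) * cos (θ t)))

section Prufer

variable {V : ℝ → ℝ} {M : ℝ≥0} {E : ℝ} {θ : ℝ → ℝ}

theorem pruferField_sub_pruferField (E' E x θ : ℝ) :
    pruferField V E' x θ - pruferField V E x θ = (E' - E) * sin θ ^ 2 := by
  simp only [pruferField]; ring

theorem pruferField_periodic (E x : ℝ) : Function.Periodic (pruferField V E x) π := by
  intro θ; simp [pruferField]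

theorem lipschitzWith_pruferField (hM : ∀ x, |V x| ≤ M) (E x : ℝ) :
    LipschitzWith (2 * (1 + M + ‖E‖₊)) (pruferField V E x) := by
  refine LipschitzWith.of_dist_le_mul fun θ φ ↦ ?_
  have key : pruferField V E x θ - pruferField V E x φ
      = (E - V x - 1) * ((sin θ + sin φ) * (sin θ - sin φ)) := by
    simp only [pruferField, cos_sq']; ring
  have h₁ : |E - V x - 1| ≤ 1 + M + |E| := by
    have := abs_le.1 (hM x)
    rw [abs_le]; constructor <;> linarith [neg_abs_le E, le_abs_self E]
  have h₂ : |sin θ + sin φ| ≤ 2 :=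
    (abs_add_le _ _).trans (by linarith [abs_sin_le_one θ, abs_sin_le_one φ])
  rw [dist_eq, dist_eq, key, abs_mul, abs_mul]
  push_cast
  rw [Real.norm_eq_abs]
  calc |E - V x - 1| * (|sin θ + sin φ| * |sin θ - sin φ|)
      ≤ (1 + M + |E|) * (2 * |θ - φ|) :=
        mul_le_mul h₁ (mul_le_mul h₂ (abs_sin_sub_sin_le θ φ) (abs_nonneg _) zero_le_two)
          (by positivity) (by positivity)
    _ = 2 * (1 + M + |E|) * |θ - φ| := by ring

theorem norm_pruferField_le (hM : ∀ x, |V x| ≤ M) (E x θ : ℝ) :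
    ‖pruferField V E x θ‖ ≤ (1 + M + ‖E‖₊ : ℝ≥0) := by
  have h₁ : |E - V x| ≤ M + |E| := by
    have := abs_le.1 (hM x)
    rw [abs_le]; constructor <;> linarith [neg_abs_le E, le_abs_self E]
  push_cast
  rw [Real.norm_eq_abs, Real.norm_eq_abs]
  calc |pruferField V E x θ| ≤ cos θ ^ 2 + |E - V x| * sin θ ^ 2 := by
        refine (abs_add_le _ _).trans_eq ?_
        rw [abs_mul, abs_sq, abs_sq]
    _ ≤ 1 + (M + |E|) * 1 := by gcongr; exacts [cos_sq_le_one θ, sin_sq_le_one θ]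
    _ = 1 + M + |E| := by ring

theorem continuous_pruferField_left (hVc : Continuous V) (E θ : ℝ) :
    Continuous fun x ↦ pruferField V E x θ := by
  unfold pruferField; fun_prop

theorem exists_pruferAngle (hM : ∀ x, |V x| ≤ M) (hVc : Continuous V) (E : ℝ) :
    ∃ θ : ℝ → ℝ, θ 0 = 0 ∧ IsIntegralCurve θ (pruferField V E) :=
  exists_isIntegralCurve_of_lipschitzWith (lipschitzWith_pruferField hM E)
    (continuous_pruferField_left hVc E) (norm_pruferField_le hM E) 0 0

theorem IsIntegralCurve.add_int_mul_pi (hθ : IsIntegralCurve θ (pruferField V E)) (k : ℤ) :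
    IsIntegralCurve (fun x ↦ θ x + k * π) (pruferField V E) := fun x ↦ by
  rw [(pruferField_periodic E x).int_mul k]
  exact (hθ x).add_const _

theorem IsIntegralCurve.exists_mem_Ioo_sin_ne_zero (hθ : IsIntegralCurve θ (pruferField V E))
    {x y : ℝ} (hxy : x < y) : ∃ t ∈ Ioo x y, sin (θ t) ≠ 0 := by
  by_contra! h
  have ht : (x + y) / 2 ∈ Ioo x y := ⟨by linarith, by linarith⟩
  set t := (x + y) / 2
  have hzero : HasDerivAt (fun s ↦ sin (θ s)) 0 t :=
    (hasDerivAt_const t 0).congr_of_eventuallyEq (eventually_of_mem (Ioo_mem_nhds ht.1 ht.2) h)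
  -- where `sin θ = 0`, the derivative `cos θ * pruferField V E t θ` of `sin ∘ θ` is `cos³ θ = ±1`
  have hcos : cos (θ t) * pruferField V E t (θ t) = 0 := (hθ t).sin.unique hzero
  have := sin_sq_add_cos_sq (θ t)
  simp_all [pruferField]

theorem IsIntegralCurve.pruferAngle_lt_of_le (hM : ∀ x, |V x| ≤ M) {E' : ℝ} (hE : E < E')
    {α β : ℝ → ℝ} (hα : IsIntegralCurve α (pruferField V E))
    (hβ : IsIntegralCurve β (pruferField V E')) {x y : ℝ} (hxy : x < y) (hle : α x ≤ β x) :
    α y < β y := by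
  set L : ℝ := ((2 * (1 + M + ‖E'‖₊) : ℝ≥0) : ℝ)
  have hgap (t : ℝ) :
      pruferField V E t (α t) - pruferField V E' t (β t) ≤ L * |α t - β t| := by
    have hlip := (lipschitzWith_pruferField hM E' t).dist_le_mul (α t) (β t)
    rw [dist_eq, dist_eq] at hlip
    have := pruferField_sub_pruferField (V := V) E' E t (α t)
    nlinarith [le_abs_self (pruferField V E' t (α t) - pruferField V E' t (β t)),
      sq_nonneg (sin (α t))]
  have hfwd (t : ℝ) (ht : x ≤ t) : α t ≤ β t := sub_nonpos.1 <|
    nonpos_of_hasDerivAt_le_mul (f := fun t ↦ α t - β t) (fun t ↦ (hα t).sub (hβ t))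
      (fun t ht ↦ by rw [← abs_of_pos ht]; exact hgap t) (sub_nonpos.2 hle) ht
  -- otherwise `α = β` on `[x, y]`, which forces `(E' - E) sin² α = 0` there
  by_contra! hge
  have hbwd (t : ℝ) (ht : t ≤ y) : β t ≤ α t := sub_nonpos.1 <|
    nonpos_of_neg_mul_le_hasDerivAt (f := fun t ↦ β t - α t) (L := L)
      (fun t ↦ (hβ t).sub (hα t))
      (fun t ht ↦ by rw [← abs_of_pos ht, abs_sub_comm]; linarith [hgap t])
      (sub_nonpos.2 hge) ht
  obtain ⟨t, ht, hsin⟩ := hα.exists_mem_Ioo_sin_ne_zero hxy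
  have hαβ : α =ᶠ[𝓝 t] β := eventually_of_mem (Ioo_mem_nhds ht.1 ht.2) fun s hs ↦
    le_antisymm (hfwd s hs.1.le) (hbwd s hs.2.le)
  have hderiv := (hα t).unique ((hβ t).congr_of_eventuallyEq hαβ)
  rw [← hαβ.eq_of_nhds, ← sub_eq_zero, pruferField_sub_pruferField] at hderiv
  exact hsin <| pow_eq_zero_iff two_ne_zero |>.1 <|
    (mul_eq_zero.1 hderiv).resolve_left (by linarith)

theorem IsIntegralCurve.sub_lt_sub_of_sin_eq_zero (hM : ∀ x, |V x| ≤ M) {E' : ℝ} (hE : E < E')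
    {α β : ℝ → ℝ} (hα : IsIntegralCurve α (pruferField V E))
    (hβ : IsIntegralCurve β (pruferField V E')) {x y : ℝ} (hxy : x < y)
    (hsin : sin (β x - α x) = 0 ∨ sin (β y - α y) = 0) : β x - α x < β y - α y := by
  rcases hsin with h | h
  · obtain ⟨k, hk⟩ := sin_eq_zero_iff.1 h
    have := (hα.add_int_mul_pi k).pruferAngle_lt_of_le hM hE hβ hxy (by linarith)
    linarith
  · obtain ⟨k, hk⟩ := sin_eq_zero_iff.1 h
    by_contra! hge
    have := (hα.add_int_mul_pi k).pruferAngle_lt_of_le hM hE hβ hxy (by linarith)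
    linarith

theorem continuous_pruferAngle_energy (hM : ∀ x, |V x| ≤ M) {Θ : ℝ → ℝ → ℝ}
    (hΘ₀ : ∀ E, Θ E 0 = 0) (hΘ : ∀ E, IsIntegralCurve (Θ E) (pruferField V E)) {a : ℝ}
    (ha : 0 ≤ a) : Continuous fun E ↦ Θ E a := by
  refine continuous_iff_continuousAt.2 fun E ↦ ?_
  set K := 2 * (1 + M + ‖E‖₊)
  have hdist (E' : ℝ) :
      dist (Θ E a) (Θ E' a) ≤ gronwallBound 0 K (0 + |E' - E|) (a - 0) := by
    refine dist_le_of_approx_trajectories_ODE (lipschitzWith_pruferField hM E)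
      (hΘ E).continuous.continuousOn (fun t _ ↦ (hΘ E t).hasDerivWithinAt) (fun t _ ↦ by simp)
      (hΘ E').continuous.continuousOn (fun t _ ↦ (hΘ E' t).hasDerivWithinAt) (fun t _ ↦ ?_)
      (by simp [hΘ₀]) a ⟨ha, le_rfl⟩
    rw [dist_eq, pruferField_sub_pruferField, abs_mul]
    exact mul_le_of_le_one_right (abs_nonneg _) (by simpa using sin_sq_le_one (Θ E' t))
  have hbound : Tendsto (fun E' ↦ gronwallBound 0 K (0 + |E' - E|) (a - 0)) (𝓝 E) (𝓝 0) := by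
    have hcont : Continuous fun E' ↦ gronwallBound 0 K (0 + |E' - E|) (a - 0) :=
      (gronwallBound_continuous_ε 0 K (a - 0)).comp (by fun_prop)
    simpa [gronwallBound_ε0_δ0] using hcont.tendsto E
  exact tendsto_iff_dist_tendsto_zero.2 <| squeeze_zero (fun _ ↦ dist_nonneg)
    (fun E' ↦ (dist_comm _ _).trans_le (hdist E')) hbound

theorem pruferAmplitude_pos (θ : ℝ → ℝ) (x : ℝ) : 0 < pruferAmplitude V E θ x := exp_pos _

@[simp] theorem pruferAmplitude_zero (θ : ℝ → ℝ) : pruferAmplitude V E θ 0 = 1 := by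
  simp [pruferAmplitude]

theorem hasDerivAt_pruferAmplitude (hVc : Continuous V) (hθ : Continuous θ) (x : ℝ) :
    HasDerivAt (pruferAmplitude V E θ)
      (pruferAmplitude V E θ x * ((1 + V x - E) * (sin (θ x) * cos (θ x)))) x := by
  have hc : Continuous fun t ↦ (1 + V t - E) * (sin (θ t) * cos (θ t)) := by fun_prop
  exact (hc.integral_hasStrictDerivAt 0 x).hasDerivAt.exp

theorem IsIntegralCurve.hasDerivAt_pruferAmplitude_mul_sin (hVc : Continuous V)
    (hθ : IsIntegralCurve θ (pruferField V E)) (x : ℝ) :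
    HasDerivAt (fun y ↦ pruferAmplitude V E θ y * sin (θ y))
      (pruferAmplitude V E θ x * cos (θ x)) x := by
  refine ((hasDerivAt_pruferAmplitude hVc hθ.continuous x).fun_mul (hθ x).sin).congr_deriv ?_
  simp only [pruferField]
  linear_combination (pruferAmplitude V E θ x * cos (θ x)) * sin_sq_add_cos_sq (θ x)

theorem IsIntegralCurve.hasDerivAt_pruferAmplitude_mul_cos (hVc : Continuous V)
    (hθ : IsIntegralCurve θ (pruferField V E)) (x : ℝ) :
    HasDerivAt (fun y ↦ pruferAmplitude V E θ y * cos (θ y))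
      ((V x - E) * (pruferAmplitude V E θ x * sin (θ x))) x := by
  refine ((hasDerivAt_pruferAmplitude hVc hθ.continuous x).fun_mul (hθ x).cos).congr_deriv ?_
  simp only [pruferField]
  linear_combination ((V x - E) * pruferAmplitude V E θ x * sin (θ x)) * sin_sq_add_cos_sq (θ x)

theorem IsIntegralCurve.eq_deriv_mul_pruferAmplitude_mul_sin (hVc : Continuous V)
    (hθ₀ : θ 0 = 0) (hθ : IsIntegralCurve θ (pruferField V E)) {a : ℝ} {u : ℝ → ℝ}
    (hu : ContDiff ℝ 2 u) (hode : ∀ x ∈ Icc 0 a, deriv (deriv u) x = (V x - E) * u x)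
    (hu₀ : u 0 = 0) {x : ℝ} (hx : x ∈ Icc 0 a) :
    u x = deriv u 0 * (pruferAmplitude V E θ x * sin (θ x)) ∧
      deriv u x = deriv u 0 * (pruferAmplitude V E θ x * cos (θ x)) := by
  set c := deriv u 0
  have hdiff := eq_zero_of_hasDerivAt_mul_self_of_eq_zero_right (q := fun x ↦ V x - E)
    (y := fun x ↦ u x - c * (pruferAmplitude V E θ x * sin (θ x)))
    (y' := fun x ↦ deriv u x - c * (pruferAmplitude V E θ x * cos (θ x)))
    (hVc.sub continuous_const).continuousOn
    (fun x _ ↦ (hasDerivAt_deriv_of_contDiff_two hu x).1.sub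
      ((hθ.hasDerivAt_pruferAmplitude_mul_sin hVc x).const_mul c))
    (fun x hx ↦ ((hasDerivAt_deriv_of_contDiff_two hu x).2.sub
      ((hθ.hasDerivAt_pruferAmplitude_mul_cos hVc x).const_mul c)).congr_deriv
        (by rw [hode x hx]; ring))
    (by simp [hu₀, hθ₀]) (by simp [c, hθ₀]) x hx
  exact ⟨sub_eq_zero.1 hdiff.1, sub_eq_zero.1 hdiff.2⟩

theorem IsIntegralCurve.isDirichletEigenvalue_iff (hVc : Continuous V) (hθ₀ : θ 0 = 0)
    (hθ : IsIntegralCurve θ (pruferField V E)) {a : ℝ} (ha : 0 < a) :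
    IsDirichletEigenvalue V a E ↔ sin (θ a) = 0 := by
  set r := pruferAmplitude V E θ
  constructor
  · rintro ⟨u, hu, hode, ⟨x, hx, hux⟩, hu₀, hua⟩
    have hrep {x : ℝ} := hθ.eq_deriv_mul_pruferAmplitude_mul_sin hVc hθ₀ hu hode hu₀ (x := x)
    have hc : deriv u 0 ≠ 0 := fun hc ↦ hux (by simpa [hc] using (hrep hx).1)
    simpa [hua, hc, (pruferAmplitude_pos θ a).ne', eq_comm] using (hrep ⟨ha.le, le_rfl⟩).1
  · intro hsin
    have hr : Continuous r := continuous_iff_continuousAt.2 fun x ↦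
      (hasDerivAt_pruferAmplitude hVc hθ.continuous x).continuousAt
    have hw := hθ.hasDerivAt_pruferAmplitude_mul_sin hVc
    have hw' := hθ.hasDerivAt_pruferAmplitude_mul_cos hVc
    obtain ⟨x, hx, hsinx⟩ := hθ.exists_mem_Ioo_sin_ne_zero ha
    refine ⟨fun x ↦ r x * sin (θ x), contDiff_two_of_hasDerivAt hw hw' ?_, fun x _ ↦ ?_,
      ⟨x, Ioo_subset_Icc_self hx, mul_ne_zero (pruferAmplitude_pos θ x).ne' hsinx⟩,
      by simp [r, hθ₀], by simp [hsin]⟩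
    · exact (hVc.sub continuous_const).mul (hr.mul (continuous_sin.comp hθ.continuous))
    · rw [funext fun x ↦ (hw x).deriv, (hw' x).deriv]

end Prufer

theorem renormalized_oscillation_finite_interval_general (V : ℝ → ℝ) (hVb : ∃ M, ∀ x, |V x| ≤ M)
    (hVc : Continuous V) (E₁ E₂ : ℝ) (hE : E₁ < E₂) (u₁ u₂ : ℝ → ℝ)
    (hu₁ : ContDiff ℝ 2 u₁) (hu₂ : ContDiff ℝ 2 u₂)
    (hode₁ : ∀ x, deriv (deriv u₁) x = (V x - E₁) * u₁ x)
    (hode₂ : ∀ x, deriv (deriv u₂) x = (V x - E₂) * u₂ x)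
    (h₁0 : u₁ 0 = 0) (h₁0' : deriv u₁ 0 = 1) (h₂0 : u₂ 0 = 0) (h₂0' : deriv u₂ 0 = 1)
    (a : ℝ) (ha : 0 < a) (h₂a : u₂ a = 0) :
    {E ∈ Ioo E₁ E₂ | IsDirichletEigenvalue V a E}.Finite ∧
    {x ∈ Ioo 0 a | u₁ x * deriv u₂ x - deriv u₁ x * u₂ x = 0}.Finite ∧
    {E ∈ Ioo E₁ E₂ | IsDirichletEigenvalue V a E}.ncard =
      {x ∈ Ioo 0 a | u₁ x * deriv u₂ x - deriv u₁ x * u₂ x = 0}.ncard := by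
  obtain ⟨M, hM⟩ := hVb
  replace hM (x : ℝ) : |V x| ≤ M.toNNReal := (hM x).trans M.le_coe_toNNReal
  choose Θ hΘ₀ hΘ using exists_pruferAngle hM hVc
  have hrep₁ {x} := (hΘ E₁).eq_deriv_mul_pruferAmplitude_mul_sin hVc (hΘ₀ E₁) hu₁
    (fun x _ ↦ hode₁ x) h₁0 (a := a) (x := x)
  have hrep₂ {x} := (hΘ E₂).eq_deriv_mul_pruferAmplitude_mul_sin hVc (hΘ₀ E₂) hu₂
    (fun x _ ↦ hode₂ x) h₂0 (a := a) (x := x)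
  simp only [h₁0', h₂0', one_mul] at hrep₁ hrep₂
  have heig : {E ∈ Ioo E₁ E₂ | IsDirichletEigenvalue V a E} =
      {E ∈ Ioo E₁ E₂ | sin (Θ E a) = 0} :=
    sep_ext_iff.2 fun E _ ↦ (hΘ E).isDirichletEigenvalue_iff hVc (hΘ₀ E) ha
  have hwr : {x ∈ Ioo 0 a | u₁ x * deriv u₂ x - deriv u₁ x * u₂ x = 0} =
      {x ∈ Ioo 0 a | sin (Θ E₂ x - Θ E₁ x) = 0} := sep_ext_iff.2 fun x hx ↦ by
    obtain ⟨hu₁x, hu₁x'⟩ := hrep₁ (Ioo_subset_Icc_self hx)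
    obtain ⟨hu₂x, hu₂x'⟩ := hrep₂ (Ioo_subset_Icc_self hx)
    rw [hu₁x, hu₁x', hu₂x, hu₂x']
    exact polar_wronskian_eq_zero_iff (pruferAmplitude_pos _ x).ne'
      (pruferAmplitude_pos _ x).ne' _ _
  obtain ⟨hfinE, hcardE⟩ := finite_and_ncard_sin_eq_zero_eq hE.le
    (continuous_pruferAngle_energy hM hΘ₀ hΘ ha.le).continuousOn
    fun E _ E' _ hEE' _ ↦ (hΘ E).pruferAngle_lt_of_le hM hEE' (hΘ E') ha (by rw [hΘ₀, hΘ₀])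
  obtain ⟨hfinW, hcardW⟩ := finite_and_ncard_sin_eq_zero_eq (f := fun x ↦ Θ E₂ x - Θ E₁ x)
    ha.le ((hΘ E₂).continuous.sub (hΘ E₁).continuous).continuousOn
    fun x _ y _ hxy ↦ (hΘ E₁).sub_lt_sub_of_sin_eq_zero hM hE (hΘ E₂) hxy
  obtain ⟨N, hN⟩ := sin_eq_zero_iff.1 <| by
    simpa [h₂a, eq_comm, (pruferAmplitude_pos _ a).ne'] using (hrep₂ ⟨ha.le, le_rfl⟩).1
  refine ⟨heig ▸ hfinE, hwr ▸ hfinW, ?_⟩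
  rw [heig, hwr, hcardE, hcardW, hΘ₀, hΘ₀, sub_self, ← hN]
  exact ncard_int_mul_pi_mem_Ioo_reflect _ N

/-- **finite-interval renormalized oscillation theorem.** Let `E₁ < E₂`, let
`u_j = u(·,E_j)` be the solutions with `u_j(0) = 0`, `u_j′(0) = 1`, let `a > 0` with
`u₂(a) = 0`, `u₁(a) ≠ 0`, and let `W = u₁u₂′ − u₁′u₂`. Then the number of Dirichlet
eigenvalues of `−d²/dx² + V` on `[0,a]` in `(E₁,E₂)` equals the number of zeros of `W` in
`(0,a)`. -/
theorem renormalized_oscillation_finite_interval (V : ℝ → ℝ) (hVb : ∃ M, ∀ x, |V x| ≤ M)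
    (hVc : Continuous V) (E₁ E₂ : ℝ) (hE : E₁ < E₂) (u₁ u₂ : ℝ → ℝ)
    (hu₁ : ContDiff ℝ 2 u₁) (hu₂ : ContDiff ℝ 2 u₂)
    (hode₁ : ∀ x, deriv (deriv u₁) x = (V x - E₁) * u₁ x)
    (hode₂ : ∀ x, deriv (deriv u₂) x = (V x - E₂) * u₂ x)
    (h₁0 : u₁ 0 = 0) (h₁0' : deriv u₁ 0 = 1) (h₂0 : u₂ 0 = 0) (h₂0' : deriv u₂ 0 = 1)
    (a : ℝ) (ha : 0 < a) (h₂a : u₂ a = 0) (h₁a : u₁ a ≠ 0) :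
    {E ∈ Ioo E₁ E₂ | IsDirichletEigenvalue V a E}.Finite ∧
    {x ∈ Ioo 0 a | u₁ x * deriv u₂ x - deriv u₁ x * u₂ x = 0}.Finite ∧
    {E ∈ Ioo E₁ E₂ | IsDirichletEigenvalue V a E}.ncard =
      {x ∈ Ioo 0 a | u₁ x * deriv u₂ x - deriv u₁ x * u₂ x = 0}.ncard :=
  renormalized_oscillation_finite_interval_general V hVb hVc E₁ E₂ hE u₁ u₂ hu₁ hu₂ hode₁ hode₂ h₁0
    h₁0' h₂0 h₂0' a ha h₂a
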